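/- arXiv:1211.0054 — 7 statements merged into one kernel-verified Lean document; each statement's English description precedes it below -/
import Mathlib

section
/- If C has enough injectives, then for any additive F : C → D and any left exact G : C → D, there is an isomorphism Nat(F, G) ≅ Nat(R⁰F, G), natural in F and G, induced by the canonical morphism F → R⁰F. Equivalently, R⁰ is left adjoint to the inclusion of left exact functors into (C, D). -/
open CategoryTheory CategoryTheory.Limits

universe v₁ v₂ u₁ u₂

variable {C : Type u₁} {D : Type u₂} [Category.{v₁} C] [Category.{v₂} D] [Abelian C] [Abelian D]

/-- `R` is a zeroth right derived functor of `F`, i.e. there is a canonical morphism `F ⟶ R`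
which is an isomorphism on injectives, and for every injective copresentation
`0 → X → I⁰ → I¹` the sequence `0 → R(X) → R(I⁰) → R(I¹)` is exact (so that, via the
isomorphisms `R(Iʲ) ≅ F(Iʲ)`, `R(X)` is the kernel of `F(I⁰) → F(I¹)`). -/
structure IsZerothRightDerivedFunctor (F R : C ⥤ D) [F.Additive] [R.Additive] where
  unit : F ⟶ R
  isIso_unit_app_of_injective : ∀ (I : C) [Injective I], IsIso (unit.app I)
  isKernel : ∀ {X I0 I1 : C} (i : X ⟶ I0) (d : I0 ⟶ I1) [Injective I0] [Injective I1]
    [Mono i] (w : i ≫ d = 0), (ShortComplex.mk i d w).Exact →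
    Nonempty (IsLimit (KernelFork.ofι (R.map i)
      (by rw [← R.map_comp, w, R.map_zero])))

/-- A functor is left exact if it sends short exact sequences `0 → A → B → C → 0`
to exact sequences `0 → G(A) → G(B) → G(C)`. -/
def IsLeftExactFunctor (G : C ⥤ D) [G.Additive] : Prop :=
  ∀ S : ShortComplex C, S.ShortExact → Mono (S.map G).f ∧ (S.map G).Exact

/-!
A natural transformation `R ⟶ G` is determined by its components on injectives, where
`F ⟶ R` is invertible: for every `X`, `G(X) → G(I⁰)` is mono, as `G` is left exact. Conversely,
a transformation `β : F ⟶ G` transported to `R` on injectives extends to all of `R`: since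
`G(X)` is the kernel of `G(I⁰) → G(I¹)`, the map `R(X) → R(I⁰) ≅ F(I⁰) → G(I⁰)` lifts uniquely
to `R(X) → G(X)`, and naturality follows by comparing copresentations along a map `I⁰ X → I⁰ Y`
obtained from injectivity.
-/

lemma shortExact_mk_cokernel_π {X Y : C} (f : X ⟶ Y) [Mono f] :
    (ShortComplex.mk f (cokernel.π f) (cokernel.condition f)).ShortExact where
  exact := ShortComplex.exact_of_g_is_cokernel _ (cokernelIsCokernel f)

section InvAppComp

variable {𝒞 𝒟 : Type*} [Category 𝒞] [Category 𝒟] {F R G : 𝒞 ⥤ 𝒟} {u : F ⟶ R}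
  (hu : ∀ (I : 𝒞) [Injective I], IsIso (u.app I))

noncomputable def invAppComp (β : F ⟶ G) (I : 𝒞) [Injective I] : R.obj I ⟶ G.obj I :=
  have := hu I
  inv (u.app I) ≫ β.app I

lemma app_comp_invAppComp (β : F ⟶ G) (I : 𝒞) [Injective I] :
    u.app I ≫ invAppComp hu β I = β.app I := by
  have := hu I
  simp [invAppComp]

lemma map_comp_invAppComp (β : F ⟶ G) {I J : 𝒞} [Injective I] [Injective J] (g : I ⟶ J) :
    R.map g ≫ invAppComp hu β J = invAppComp hu β I ≫ G.map g := by
  have := hu I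
  rw [← cancel_epi (u.app I), ← u.naturality_assoc, app_comp_invAppComp, ← Category.assoc,
    app_comp_invAppComp, β.naturality]

end InvAppComp

namespace IsLeftExactFunctor

variable {G : C ⥤ D} [G.Additive]

lemma mono_map (hG : IsLeftExactFunctor G) {X Y : C} (f : X ⟶ Y) [Mono f] : Mono (G.map f) :=
  (hG _ (shortExact_mk_cokernel_π f)).1

lemma map_comp_map_cokernel_π_comp {X Y Z : C} (i : X ⟶ Y) (m : cokernel i ⟶ Z) :
    G.map i ≫ G.map (cokernel.π i ≫ m) = 0 := by
  rw [← G.map_comp, cokernel.condition_assoc, zero_comp, G.map_zero]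

noncomputable def isLimitMapKernelFork (hG : IsLeftExactFunctor G) {X Y Z : C} (i : X ⟶ Y)
    [Mono i] (m : cokernel i ⟶ Z) [Mono m] :
    IsLimit (KernelFork.ofι (G.map i) (map_comp_map_cokernel_π_comp i m)) :=
  have hS := hG _ (shortExact_mk_cokernel_π i)
  have := hS.1
  isKernelCompMono hS.2.fIsKernel (G.map m) (hg := hG.mono_map m) (G.map_comp _ _)

variable [EnoughInjectives C] {F R : C ⥤ D} {u : F ⟶ R}

lemma precomp_injective (hG : IsLeftExactFunctor G)
    (hu : ∀ (I : C) [Injective I], IsIso (u.app I)) :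
    Function.Injective (fun α : R ⟶ G => u ≫ α) := by
  intro α α' h
  ext X
  have := hu (Injective.under X)
  have := hG.mono_map (Injective.ι X)
  have hI : α.app (Injective.under X) = α'.app (Injective.under X) := by
    rw [← cancel_epi (u.app _)]
    exact congrArg (fun γ : F ⟶ G => γ.app _) h
  rw [← cancel_mono (G.map (Injective.ι X)), ← α.naturality, ← α'.naturality, hI]

section Extend

variable [R.PreservesZeroMorphisms] (hG : IsLeftExactFunctor G)
  (hu : ∀ (I : C) [Injective I], IsIso (u.app I)) (β : F ⟶ G)

noncomputable def extendApp (X : C) : R.obj X ⟶ G.obj X :=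
  (hG.isLimitMapKernelFork (Injective.ι X) (Injective.ι _)).lift <|
    KernelFork.ofι (R.map (Injective.ι X) ≫ invAppComp hu β _) <| by
      rw [Category.assoc, ← map_comp_invAppComp, ← R.map_comp_assoc, cokernel.condition_assoc,
        zero_comp, R.map_zero, zero_comp]

lemma extendApp_comp_map_ι (X : C) :
    hG.extendApp hu β X ≫ G.map (Injective.ι X) = R.map (Injective.ι X) ≫ invAppComp hu β _ :=
  (hG.isLimitMapKernelFork _ _).fac _ WalkingParallelPair.zero

lemma extendApp_naturality {X Y : C} (f : X ⟶ Y) :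
    R.map f ≫ hG.extendApp hu β Y = hG.extendApp hu β X ≫ G.map f := by
  have := hG.mono_map (Injective.ι Y)
  obtain ⟨g, hg⟩ : ∃ g, Injective.ι X ≫ g = f ≫ Injective.ι Y :=
    ⟨_, Injective.comp_factorThru _ _⟩
  rw [← cancel_mono (G.map (Injective.ι Y))]
  calc (R.map f ≫ hG.extendApp hu β Y) ≫ G.map (Injective.ι Y)
      = R.map (Injective.ι X) ≫ R.map g ≫ invAppComp hu β _ := by
        rw [Category.assoc, extendApp_comp_map_ι, ← R.map_comp_assoc, ← hg, R.map_comp_assoc]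
    _ = (hG.extendApp hu β X ≫ G.map (Injective.ι X)) ≫ G.map g := by
        rw [map_comp_invAppComp, extendApp_comp_map_ι, Category.assoc]
    _ = (hG.extendApp hu β X ≫ G.map f) ≫ G.map (Injective.ι Y) := by
        simp only [Category.assoc, ← G.map_comp, hg]

noncomputable def extend : R ⟶ G where
  app := hG.extendApp hu β
  naturality _ _ := hG.extendApp_naturality hu β

lemma comp_extend : u ≫ hG.extend hu β = β := by
  ext X
  have := hG.mono_map (Injective.ι X)
  rw [← cancel_mono (G.map (Injective.ι X)), NatTrans.comp_app, Category.assoc, extend,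
    extendApp_comp_map_ι, ← u.naturality_assoc, app_comp_invAppComp, β.naturality]

end Extend

lemma precomp_bijective [R.PreservesZeroMorphisms] (hG : IsLeftExactFunctor G)
    (hu : ∀ (I : C) [Injective I], IsIso (u.app I)) :
    Function.Bijective (fun α : R ⟶ G => u ≫ α) :=
  ⟨hG.precomp_injective hu, fun β => ⟨hG.extend hu β, hG.comp_extend hu β⟩⟩

end IsLeftExactFunctor

/-- If `C` has enough injectives, then for any additive `F : C ⥤ D` and any left
exact `G : C ⥤ D`, precomposition with the canonical morphism `F ⟶ R⁰F` gives a bijection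
`Nat(R⁰F, G) ≅ Nat(F, G)`; i.e. `R⁰` is left adjoint to the inclusion of left exact functors. -/
theorem zerothRightDerived_adjunction_bijection [EnoughInjectives C]
    (F R G : C ⥤ D) [F.Additive] [R.Additive] [G.Additive]
    (hR : IsZerothRightDerivedFunctor F R)
    (hG : IsLeftExactFunctor G) :
    Function.Bijective (fun (α : R ⟶ G) => hR.unit ≫ α) :=
  hG.precomp_bijective hR.isIso_unit_app_of_injective
end

section
/- Every projective object of the category fp(C, Ab) of coherent functors is representable. -/
open CategoryTheory CategoryTheory.Limits Opposite

universe v u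

variable (C : Type u) [Category.{v} C] [Abelian C]

/-- A functor `F : C ⥤ Ab` is coherent (finitely presented) if it admits a presentation
`Hom(Y,-) → Hom(X,-) → F → 0`; by the Yoneda lemma the first map is induced by some
`f : X ⟶ Y`. -/
def IsCoherent (F : C ⥤ AddCommGrpCat.{v}) : Prop :=
  ∃ (X Y : C) (f : X ⟶ Y) (α : preadditiveCoyoneda.obj (op X) ⟶ F)
    (w : preadditiveCoyoneda.map f.op ≫ α = 0),
    Epi α ∧ (ShortComplex.mk (preadditiveCoyoneda.map f.op) α w).Exact

/-- The category `fp(C, Ab)` of coherent functors, as a full subcategory of `(C, Ab)`. -/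
abbrev Fp := ObjectProperty.FullSubcategory (IsCoherent C)

/-
A projective coherent functor `F` is a retract of the representable functor `Hom(X, -)`
presenting it. The corresponding idempotent of `Hom(X, -)` comes, by Yoneda, from an
idempotent of `X`, which splits because `C` is abelian; the image `K` of that idempotent
then gives `F ≅ Hom(K, -)`.
-/

lemma isCoherent_preadditiveCoyoneda (X : C) :
    IsCoherent C (preadditiveCoyoneda.obj (op X)) :=
  ⟨X, X, 0, 𝟙 _, by simp, inferInstance, (ShortComplex.exact_iff_mono _ (by simp)).2 inferInstance⟩

namespace CategoryTheory

noncomputable def Projective.retractOfEpi {D : Type*} [Category D] {P Q : D} [Projective P]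
    (π : Q ⟶ P) [Epi π] : Retract P Q where
  i := Projective.factorThru (𝟙 P) π
  r := π

namespace Functor

variable {D E : Type*} [Category D] [Category E] (G : D ⥤ E)

def isoOfRetractOfSplitting {A : E} {Y Y' : D} (h : Retract A (G.obj Y')) (i : Y ⟶ Y')
    (r : Y' ⟶ Y) (hir : i ≫ r = 𝟙 Y) (hri : G.map (r ≫ i) = h.r ≫ h.i) :
    A ≅ G.obj Y where
  hom := h.i ≫ G.map r
  inv := G.map i ≫ h.r
  hom_inv_id := by
    rw [Category.assoc, ← G.map_comp_assoc, hri]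
    simp
  inv_hom_id := by
    rw [Category.assoc, ← Category.assoc h.r, ← hri, ← G.map_comp, ← G.map_comp, ← G.map_id]
    simp [hir]

variable [G.Full] [G.Faithful]

lemma preimage_idem {Y : D} {e : G.obj Y ⟶ G.obj Y} (he : e ≫ e = e) :
    G.preimage e ≫ G.preimage e = G.preimage e :=
  G.map_injective (by simpa using he)

instance [IsIdempotentComplete D] : G.essImage.IsStableUnderRetracts where
  of_retract {A B} h hB := by
    obtain ⟨Y', ⟨eY'⟩⟩ := hB
    let h' : Retract A (G.obj Y') := h.trans eY'.symm.retract
    have hidem : (h'.r ≫ h'.i) ≫ (h'.r ≫ h'.i) = h'.r ≫ h'.i := by simp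
    obtain ⟨Y, i, r, hir, hri⟩ :=
      IsIdempotentComplete.idempotents_split Y' _ (G.preimage_idem hidem)
    exact ⟨Y, ⟨(G.isoOfRetractOfSplitting h' i r hir (by simp [hri])).symm⟩⟩

end Functor

end CategoryTheory

/-- Every projective object of the category `fp(C, Ab)` of coherent functors is
representable. -/
theorem projective_coherent_is_representable (F : Fp C) (hF : Projective F) :
    ∃ X : C, Nonempty (F.obj ≅ preadditiveCoyoneda.obj (op X)) := by
  obtain ⟨X, -, -, α, -, hα, -⟩ := F.property
  let π : (⟨_, isCoherent_preadditiveCoyoneda C X⟩ : Fp C) ⟶ F := ObjectProperty.homMk α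
  have : Epi π := (ObjectProperty.ι (IsCoherent C)).epi_of_epi_map hα
  obtain ⟨K, ⟨e⟩⟩ := (preadditiveCoyoneda (C := C)).essImage.prop_of_retract
    ((Projective.retractOfEpi π).map (ObjectProperty.ι (IsCoherent C))) (Functor.obj_mem_essImage _ _)
  exact ⟨K.unop, ⟨e.symm⟩⟩
end

section
/- For a coherent functor F, w(F) = 0 if and only if there exists a short exact sequence 0 → X → Y → Z → 0 in C such that 0 → Hom(Z,-) → Hom(Y,-) → Hom(X,-) → F → 0 is exact; moreover, any coherent functor F with w(F) = 0 vanishes on all injective objects of C. -/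
open CategoryTheory CategoryTheory.Limits Opposite

universe v u

variable (C : Type u) [Category.{v} C] [Abelian C]

/-! The defect does not depend on the presentation. If `α : Hom(X,-) ↠ F` is the exact
presentation induced by `f` and `β : Hom(X',-) ↠ F` kills `Hom(a,-)` for a mono `a`, then
the Yoneda lemma gives `u : X ⟶ X'` and `v : X' ⟶ X` with `u ≫ a` and `u ≫ v - 𝟙 X` both
killed by `α`, hence factoring through `f`. So `g ≫ f = 0` forces `g ≫ u = 0` (as `a` is mono)
and then `g = 0`. Conversely, for `f` mono the sequence `0 → X → Y → coker f → 0` works, by left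
exactness of `Hom(-, T)`. Finally, when `f` is mono every map from `X` to an injective `I`
factors through `f`, so `α` kills `Hom(X, I)`, which surjects onto `F(I)`. -/

namespace CategoryTheory

lemma ShortComplex.exact_iff_forall_exact_map_evaluation {J D : Type*} [Category J] [Category D]
    [Abelian D] (S : ShortComplex (J ⥤ D)) :
    S.Exact ↔ ∀ j, (S.map ((evaluation J D).obj j)).Exact := by
  refine ⟨fun h j => h.map _, fun h => ?_⟩
  rw [ShortComplex.exact_iff_isZero_homology]
  exact Functor.isZero _ fun j =>
    ((S.map _).exact_iff_isZero_homology.1 (h j)).of_iso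
      (S.mapHomologyIso ((evaluation J D).obj j)).symm

lemma NatTrans.surjective_app_of_epi {D : Type*} [Category D] {G F : D ⥤ AddCommGrpCat.{v}}
    {α : G ⟶ F} (hα : Epi α) (T : D) : Function.Surjective (α.app T) :=
  (AddCommGrpCat.epi_iff_surjective _).1 ((NatTrans.epi_iff_epi_app α).1 hα T)

lemma Preadditive.mono_of_comp_eq_of_comp_eq_sub_id {C : Type*} [Category C] [Preadditive C]
    {X Y X' Y' : C} {f : X ⟶ Y} {a : X' ⟶ Y'} [Mono a] {u : X ⟶ X'} {v : X' ⟶ X}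
    {t : Y ⟶ Y'} {r : Y ⟶ X} (ht : f ≫ t = u ≫ a) (hr : f ≫ r = u ≫ v - 𝟙 X) : Mono f := by
  refine Preadditive.mono_of_cancel_zero _ fun g hg => ?_
  have hgu : g ≫ u = 0 := by
    rw [← cancel_mono a, Category.assoc, ← ht, reassoc_of% hg, zero_comp, zero_comp]
  calc g = g ≫ u ≫ v - g ≫ f ≫ r := by
        rw [hr, Preadditive.comp_sub, sub_sub_cancel, Category.comp_id]
    _ = 0 := by rw [reassoc_of% hgu, reassoc_of% hg, zero_comp, zero_comp, sub_zero]

section Representable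

variable {C : Type u} [Category.{v} C] [Preadditive C] {F : C ⥤ AddCommGrpCat.{v}}

lemma preadditiveCoyoneda_natTrans_app_comp {X S T : C} (α : preadditiveCoyoneda.obj (op X) ⟶ F)
    (g : X ⟶ S) (h : S ⟶ T) : α.app T (g ≫ h) = F.map h (α.app S g) :=
  ConcreteCategory.congr_hom (α.naturality h) g

lemma preadditiveCoyoneda_natTrans_app_comp_eq {X X' T : C}
    {α : preadditiveCoyoneda.obj (op X) ⟶ F} {β : preadditiveCoyoneda.obj (op X') ⟶ F}
    {u : X ⟶ X'} (hu : α.app X' u = β.app X' (𝟙 X')) (h : X' ⟶ T) :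
    α.app T (u ≫ h) = β.app T h := by
  rw [preadditiveCoyoneda_natTrans_app_comp, hu, ← preadditiveCoyoneda_natTrans_app_comp,
    Category.id_comp]

lemma preadditiveCoyoneda_natTrans_app_comp_eq_zero {X Y T : C} {f : X ⟶ Y}
    {α : preadditiveCoyoneda.obj (op X) ⟶ F} (hw : preadditiveCoyoneda.map f.op ≫ α = 0)
    (h : Y ⟶ T) : α.app T (f ≫ h) = 0 :=
  ConcreteCategory.congr_hom (NatTrans.congr_app hw T) h

lemma exists_comp_eq_of_app_eq_zero {X Y T : C} {f : X ⟶ Y}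
    {α : preadditiveCoyoneda.obj (op X) ⟶ F} {hw : preadditiveCoyoneda.map f.op ≫ α = 0}
    (hex : (ShortComplex.mk _ _ hw).Exact) {g : X ⟶ T} (hg : α.app T g = 0) :
    ∃ h : Y ⟶ T, f ≫ h = g :=
  (ShortComplex.ab_exact_iff _).1 (hex.map ((evaluation C AddCommGrpCat).obj T)) g hg

theorem mono_of_exact_presentation {X Y X' Y' : C} {f : X ⟶ Y} {a : X' ⟶ Y'} [Mono a]
    {α : preadditiveCoyoneda.obj (op X) ⟶ F} {β : preadditiveCoyoneda.obj (op X') ⟶ F}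
    {hw : preadditiveCoyoneda.map f.op ≫ α = 0} (hex : (ShortComplex.mk _ _ hw).Exact)
    (hα : Epi α) (hβ : Epi β) (ha : preadditiveCoyoneda.map a.op ≫ β = 0) : Mono f := by
  obtain ⟨u, hu⟩ : ∃ u : X ⟶ X', α.app X' u = β.app X' (𝟙 X') :=
    NatTrans.surjective_app_of_epi hα X' _
  obtain ⟨v, hv⟩ : ∃ v : X' ⟶ X, β.app X v = α.app X (𝟙 X) :=
    NatTrans.surjective_app_of_epi hβ X _
  obtain ⟨t, ht⟩ := exists_comp_eq_of_app_eq_zero hex (g := u ≫ a) (by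
    rw [preadditiveCoyoneda_natTrans_app_comp_eq hu, ← Category.comp_id a,
      preadditiveCoyoneda_natTrans_app_comp_eq_zero ha])
  obtain ⟨r, hr⟩ := exists_comp_eq_of_app_eq_zero hex (g := u ≫ v - 𝟙 X) (by
    rw [show α.app X (u ≫ v - 𝟙 X) = α.app X (u ≫ v) - α.app X (𝟙 X) from
      map_sub (α.app X).hom _ _, preadditiveCoyoneda_natTrans_app_comp_eq hu, hv, sub_self])
  exact Preadditive.mono_of_comp_eq_of_comp_eq_sub_id ht hr

lemma isZero_obj_of_injective {X Y : C} {f : X ⟶ Y} [Mono f]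
    {α : preadditiveCoyoneda.obj (op X) ⟶ F} (hw : preadditiveCoyoneda.map f.op ≫ α = 0)
    (hα : Epi α) (I : C) [Injective I] : IsZero (F.obj I) := by
  have : Subsingleton (F.obj I) := by
    refine subsingleton_of_forall_eq 0 fun x => ?_
    obtain ⟨g, rfl⟩ : ∃ g : X ⟶ I, α.app I g = x := NatTrans.surjective_app_of_epi hα I x
    rw [← Injective.comp_factorThru g f, preadditiveCoyoneda_natTrans_app_comp_eq_zero hw]
  exact AddCommGrpCat.isZero_of_subsingleton _

instance preadditiveCoyoneda_map_op_mono {Y Z : C} (b : Y ⟶ Z) [Epi b] :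
    Mono (preadditiveCoyoneda.map b.op) :=
  (NatTrans.mono_iff_mono_app _).2 fun _ =>
    (AddCommGrpCat.mono_iff_injective _).2 fun _ _ h => (cancel_epi b).1 h

lemma ShortComplex.Exact.exact_map_preadditiveCoyoneda_op [Balanced C] {S : ShortComplex C}
    (hS : S.Exact) [Epi S.g] : (S.op.map preadditiveCoyoneda).Exact := by
  refine (ShortComplex.exact_iff_forall_exact_map_evaluation _).2 fun T => ?_
  refine (ShortComplex.ab_exact_iff _).2 fun (g : S.X₂ ⟶ T) (hg : S.f ≫ g = 0) => ?_
  exact ⟨hS.desc g hg, hS.g_desc g hg⟩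

end Representable

end CategoryTheory

/-- For a coherent functor `F` with presentation induced by `f : X ⟶ Y` (so that
`w(F) = ker f`), `w(F) = 0` iff there is a short exact sequence `0 → X' → Y' → Z' → 0` in `C`
with `0 → Hom(Z',-) → Hom(Y',-) → Hom(X',-) → F → 0` exact; moreover if `w(F) = 0` then `F`
vanishes on all injectives of `C`. -/
theorem defect_zero_iff_four_term_resolution
    (F : C ⥤ AddCommGrpCat.{v}) (X Y : C) (f : X ⟶ Y)
    (α : preadditiveCoyoneda.obj (op X) ⟶ F)
    (hw : preadditiveCoyoneda.map f.op ≫ α = 0) (hα : Epi α)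
    (hex : (ShortComplex.mk (preadditiveCoyoneda.map f.op) α hw).Exact) :
    (IsZero (kernel f) ↔
      ∃ (X' Y' Z' : C) (a : X' ⟶ Y') (b : Y' ⟶ Z') (hab : a ≫ b = 0)
        (β : preadditiveCoyoneda.obj (op X') ⟶ F)
        (h₁ : preadditiveCoyoneda.map b.op ≫ preadditiveCoyoneda.map a.op = 0)
        (h₂ : preadditiveCoyoneda.map a.op ≫ β = 0),
        Mono a ∧ Epi b ∧ (ShortComplex.mk a b hab).Exact ∧
        Mono (preadditiveCoyoneda.map b.op) ∧
        (ShortComplex.mk (preadditiveCoyoneda.map b.op) (preadditiveCoyoneda.map a.op) h₁).Exact ∧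
        (ShortComplex.mk (preadditiveCoyoneda.map a.op) β h₂).Exact ∧ Epi β) ∧
    (IsZero (kernel f) → ∀ (I : C), Injective I → IsZero (F.obj I)) := by
  rw [← Preadditive.mono_iff_isZero_kernel]
  refine ⟨⟨fun hf => ?_, ?_⟩, fun hf I hI => isZero_obj_of_injective hw hα I⟩
  · let S := ShortComplex.mk f (cokernel.π f) (cokernel.condition f)
    have hS : S.Exact := S.exact_of_g_is_cokernel (cokernelIsCokernel f)
    exact ⟨X, Y, cokernel f, f, cokernel.π f, S.zero, α, (S.op.map preadditiveCoyoneda).zero, hw,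
      hf, inferInstance, hS, inferInstance, hS.exact_map_preadditiveCoyoneda_op, hex, hα⟩
  · rintro ⟨X', Y', Z', a, b, -, β, -, ha, _, -, -, -, -, -, hβ⟩
    exact mono_of_exact_presentation hex hα hβ ha
end

section
/- Let F be a coherent functor on an abelian category C and G : C → Ab a left exact additive functor. Then there are isomorphisms G(w(F)) ≅ Nat(F, G), natural in F and G. -/
open CategoryTheory CategoryTheory.Limits Opposite

universe v u

variable (C : Type u) [Category.{v} C] [Abelian C]

/-!
Applying `Hom(-, G)` to the presentation `Hom(Y,-) → Hom(X,-) → F → 0` gives the left exact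
sequence `0 → Nat(F, G) → Nat(Hom(X,-), G) → Nat(Hom(Y,-), G)`, which the additive Yoneda
lemma identifies with `0 → ker G(f) → G(X) → G(Y)`. Since `G` is left exact,
`ker G(f) ≅ G(ker f)`.
-/

def AddMonoidHom.kerAddEquivOfComm {A B A' B' : Type*} [AddGroup A] [AddGroup B] [AddGroup A']
    [AddGroup B'] {g : A →+ B} {g' : A' →+ B'} (e : A ≃+ A') (e' : B ≃+ B')
    (h : ∀ a, g' (e a) = e' (g a)) : g.ker ≃+ g'.ker :=
  (e.addSubgroupMap g.ker).trans <| AddEquiv.addSubgroupCongr <| by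
    ext a'
    obtain ⟨a, rfl⟩ := e.surjective a'
    simp [h]

namespace CategoryTheory

variable {D : Type*} [Category.{v} D] [Preadditive D]

noncomputable def Limits.CokernelCofork.IsColimit.homAddEquiv {P Q : D} {m : P ⟶ Q}
    {c : CokernelCofork m} (hc : IsColimit c) (Z : D) :
    (c.pt ⟶ Z) ≃+ (Preadditive.leftComp Z m).ker :=
  AddEquiv.ofBijective
    ((Preadditive.leftComp Z c.π).codRestrict _ fun k => by simp [Preadditive.leftComp])
    ⟨fun _ _ h => Cofork.IsColimit.hom_ext hc (congrArg Subtype.val h),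
     fun ⟨φ, hφ⟩ => ⟨(CokernelCofork.IsColimit.desc' hc φ hφ).1,
       Subtype.ext (CokernelCofork.IsColimit.desc' hc φ hφ).2⟩⟩

noncomputable def Functor.objKernelAddEquivKer (G : D ⥤ AddCommGrpCat.{v})
    [G.PreservesZeroMorphisms] {X Y : D} (f : X ⟶ Y) [HasKernel f]
    [PreservesLimit (parallelPair f 0) G] : G.obj (Limits.kernel f) ≃+ (G.map f).hom.ker :=
  ((PreservesKernel.iso G f).trans (AddCommGrpCat.kernelIsoKer (G.map f))).addCommGroupIsoToAddEquiv

section Yoneda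

variable {X : D} {G : D ⥤ AddCommGrpCat.{v}}

lemma preadditiveCoyoneda_hom_app_eq_map (φ : preadditiveCoyoneda.obj (op X) ⟶ G) {Z : D}
    (u : X ⟶ Z) : φ.app Z u = G.map u (φ.app X (𝟙 X)) := by
  have h := NatTrans.naturality_apply φ u (𝟙 X)
  change φ.app Z (𝟙 X ≫ u) = _ at h
  rwa [Category.id_comp] at h

variable (X G) [G.Additive]

def preadditiveCoyonedaAddEquiv : (preadditiveCoyoneda.obj (op X) ⟶ G) ≃+ G.obj X where
  toFun φ := φ.app X (𝟙 X)
  invFun x :=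
    { app Z := AddCommGrpCat.ofHom <|
        AddMonoidHom.mk' (fun u : X ⟶ Z => G.map u x) fun u v => by
          simp [show G.map (u + v) = G.map u + G.map v from G.map_add]
      naturality Z W g := by
        ext u
        change G.map (u ≫ g) x = G.map g (G.map u x)
        simp [show G.map (u ≫ g) = G.map u ≫ G.map g from G.map_comp u g] }
  left_inv φ := by ext Z u; exact (preadditiveCoyoneda_hom_app_eq_map φ u).symm
  right_inv x := by
    change G.map (𝟙 X) x = x
    simp
  map_add' φ ψ := rfl

lemma map_preadditiveCoyonedaAddEquiv {Y : D} (f : X ⟶ Y)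
    (φ : preadditiveCoyoneda.obj (op X) ⟶ G) :
    G.map f (preadditiveCoyonedaAddEquiv X G φ) =
      preadditiveCoyonedaAddEquiv Y G (preadditiveCoyoneda.map f.op ≫ φ) := by
  change _ = φ.app Y (f ≫ 𝟙 Y)
  rw [Category.comp_id, preadditiveCoyoneda_hom_app_eq_map φ f]
  rfl

end Yoneda

end CategoryTheory

/-- For a coherent functor `F` with defect `w(F) = ker f` and a left exact
additive functor `G : C ⥤ Ab`, there is an isomorphism of abelian groups
`G(w(F)) ≅ Nat(F, G)`. -/
theorem leftExact_eval_defect_iso_nat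
    (F : C ⥤ AddCommGrpCat.{v}) (X Y : C) (f : X ⟶ Y)
    (α : preadditiveCoyoneda.obj (op X) ⟶ F)
    (hw : preadditiveCoyoneda.map f.op ≫ α = 0) (hα : Epi α)
    (hex : (ShortComplex.mk (preadditiveCoyoneda.map f.op) α hw).Exact)
    (G : C ⥤ AddCommGrpCat.{v}) [G.Additive] [PreservesFiniteLimits G] :
    Nonempty ((G.obj (kernel f)) ≃+ (F ⟶ G)) := by
  let natAddEquiv : (F ⟶ G) ≃+ (Preadditive.leftComp G (preadditiveCoyoneda.map f.op)).ker :=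
    CokernelCofork.IsColimit.homAddEquiv hex.gIsCokernel G
  let yoneda : (Preadditive.leftComp G (preadditiveCoyoneda.map f.op)).ker ≃+ (G.map f).hom.ker :=
    AddMonoidHom.kerAddEquivOfComm (preadditiveCoyonedaAddEquiv X G)
      (preadditiveCoyonedaAddEquiv Y G) (map_preadditiveCoyonedaAddEquiv X G f)
  exact ⟨(G.objKernelAddEquivKer f).trans (yoneda.symm.trans natAddEquiv.symm)⟩
end

section
/- (CoYoneda lemma for coherent functors) For any coherent functor F on an abelian category C and any object X of C, Nat(F, Hom(X,-)) ≅ Hom_C(X, w(F)), naturally in F and X. -/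
/-!
A presentation `Hom(Y,-) → Hom(X,-) → F → 0` exhibits `F` as a cokernel in the functor category, so
a natural transformation `F ⟶ Hom(Z,-)` is a map `Hom(X,-) ⟶ Hom(Z,-)` killed by `Hom(f,-)`. By the
Yoneda lemma such maps are the morphisms `g : Z ⟶ X` with `g ≫ f = 0`, i.e. the morphisms
`Z ⟶ ker f`.
-/

open CategoryTheory CategoryTheory.Limits Opposite

universe v u

variable (C : Type u) [Category.{v} C] [Abelian C]

namespace CategoryTheory

variable {D : Type*} [Category D] [Preadditive D]

noncomputable def ShortComplex.Exact.homAddEquivKerLeftComp [Balanced D] {S : ShortComplex D}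
    (hS : S.Exact) [Epi S.g] (A : D) : (S.X₃ ⟶ A) ≃+ (Preadditive.leftComp A S.f).ker where
  toFun φ := ⟨S.g ≫ φ, show S.f ≫ S.g ≫ φ = 0 by simp⟩
  invFun ψ := hS.desc ψ.1 ψ.2
  left_inv φ := (cancel_epi S.g).1 (hS.g_desc _ _)
  right_inv ψ := Subtype.ext (hS.g_desc _ _)
  map_add' φ φ' := Subtype.ext (Preadditive.comp_add _ _ _ _ _ _)

noncomputable def Limits.kernel.homAddEquivKerRightComp {X Y : D} (f : X ⟶ Y) [HasKernel f]
    (Z : D) : (Z ⟶ kernel f) ≃+ (Preadditive.rightComp Z f).ker where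
  toFun g := ⟨g ≫ kernel.ι f, show (g ≫ kernel.ι f) ≫ f = 0 by simp⟩
  invFun h := kernel.lift f h.1 h.2
  left_inv g := (cancel_mono (kernel.ι f)).1 (kernel.lift_ι _ _ _)
  right_inv h := Subtype.ext (kernel.lift_ι _ _ _)
  map_add' g g' := Subtype.ext (Preadditive.add_comp _ _ _ _ _ _)

def preadditiveCoyonedaMapAddEquiv (X Z : D) :
    (Z ⟶ X) ≃+ (preadditiveCoyoneda.obj (op X) ⟶ preadditiveCoyoneda.obj (op Z)) where
  toFun g := preadditiveCoyoneda.map g.op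
  invFun β := β.app X (𝟙 X)
  left_inv := Category.comp_id
  right_inv β := by
    ext W h
    change β.app X (𝟙 X) ≫ h = β.app W h
    exact (ConcreteCategory.congr_hom (β.naturality h) (𝟙 X)).symm.trans
      (congrArg (β.app W) (Category.id_comp h))
  map_add' g g' := by
    ext W h
    exact Preadditive.add_comp _ _ _ g g' h

lemma preadditiveCoyoneda_map_comp_eq_zero_iff {X Y Z : D} (f : X ⟶ Y) (g : Z ⟶ X) :
    preadditiveCoyoneda.map f.op ≫ preadditiveCoyoneda.map g.op = 0 ↔ g ≫ f = 0 := by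
  rw [← Functor.map_comp, ← op_comp]
  exact (preadditiveCoyonedaMapAddEquiv Y Z).map_eq_zero_iff

def preadditiveCoyonedaKerAddEquiv {X Y : D} (f : X ⟶ Y) (Z : D) :
    (Preadditive.rightComp Z f).ker ≃+
      (Preadditive.leftComp (preadditiveCoyoneda.obj (op Z)) (preadditiveCoyoneda.map f.op)).ker :=
  ((preadditiveCoyonedaMapAddEquiv X Z).addSubgroupMap _).trans <| AddEquiv.addSubgroupCongr <| by
    ext β
    obtain ⟨g, rfl⟩ := (preadditiveCoyonedaMapAddEquiv X Z).surjective β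
    exact (AddSubgroup.mem_map_iff_mem (preadditiveCoyonedaMapAddEquiv X Z).injective).trans
      (preadditiveCoyoneda_map_comp_eq_zero_iff f g).symm

end CategoryTheory

/-- CoYoneda lemma for coherent functors: For a coherent functor `F` with
defect `w(F) = ker f` and any object `Z : C`, there is an isomorphism of abelian groups
`Nat(F, Hom(Z,-)) ≅ Hom_C(Z, w(F))`. -/
theorem coYoneda_for_coherent
    (F : C ⥤ AddCommGrpCat.{v}) (X Y : C) (f : X ⟶ Y)
    (α : preadditiveCoyoneda.obj (op X) ⟶ F)
    (hw : preadditiveCoyoneda.map f.op ≫ α = 0) (hα : Epi α)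
    (hex : (ShortComplex.mk (preadditiveCoyoneda.map f.op) α hw).Exact)
    (Z : C) :
    Nonempty ((F ⟶ preadditiveCoyoneda.obj (op Z)) ≃+ (Z ⟶ kernel f)) :=
  ⟨(hex.homAddEquivKerLeftComp _).trans <|
    (preadditiveCoyonedaKerAddEquiv f Z).symm.trans (kernel.homAddEquivKerRightComp f Z).symm⟩
end

section
/- Every coherent functor F fits into a four-term exact sequence 0 → F₀ → F → Hom(w(F), -) → F₁ → 0, natural in F, where w(F₀) = 0 and w(F₁) = 0; the middle map φ is the unit of the adjunction between r⁰ = Hom(w(-), -) and the inclusion of left exact coherent functors. -/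
open CategoryTheory CategoryTheory.Limits Opposite

universe v u

variable (C : Type u) [Category.{v} C] [Abelian C]

/-- A functor has zero defect if it has a presentation induced by `f` with `ker f = 0`. -/
def HasZeroDefect (G : C ⥤ AddCommGrpCat.{v}) : Prop :=
  ∃ (X Y : C) (f : X ⟶ Y) (α : preadditiveCoyoneda.obj (op X) ⟶ G)
    (w : preadditiveCoyoneda.map f.op ≫ α = 0),
    Epi α ∧ (ShortComplex.mk (preadditiveCoyoneda.map f.op) α w).Exact ∧
    IsZero (kernel f)

/-!
Since `α` is a cokernel of `Hom(f, -)` and `kernel.ι f ≫ f = 0`, the map `Hom(kernel.ι f, -)`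
descends along `α` to `φ : F ⟶ Hom(ker f, -)`. As `α` is epi, `coker φ` is the cokernel of
`α ≫ φ = Hom(kernel.ι f, -)`, a presentation by a monomorphism. For `ker φ`: pointwise, `α u`
lies in `ker φ` iff `u` kills `ker f`, i.e. iff `u` factors through `X ↠ coim f`; so
`Hom(coim f, -) → Hom(X, -) → F` lifts to an epimorphism onto `ker φ`, whose relations come
from `Hom(Y, -)` through the monomorphism `coim f ↪ Y`.
-/

lemma CategoryTheory.ShortComplex.exact_of_forall_exact_map_evaluation {J 𝒜 : Type*} [Category J]
    [Category 𝒜] [Abelian 𝒜] (S : ShortComplex (J ⥤ 𝒜))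
    (h : ∀ j : J, (S.map ((evaluation J 𝒜).obj j)).Exact) : S.Exact := by
  rw [S.exact_iff_isZero_homology]
  refine Functor.isZero _ fun j => ?_
  exact ((ShortComplex.exact_iff_isZero_homology _).1 (h j)).of_iso
    (S.mapHomologyIso ((evaluation J 𝒜).obj j)).symm

section Presentation

variable {C}

lemma preadditiveCoyoneda_map_op_comp_eq_zero {P Q R : C} {g : P ⟶ Q} {g' : Q ⟶ R}
    (h : g ≫ g' = 0) :
    preadditiveCoyoneda.map g'.op ≫ preadditiveCoyoneda.map g.op = 0 := by
  rw [← Functor.map_comp, ← op_comp, h, op_zero, Functor.map_zero]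

lemma hasZeroDefect_cokernel {G : C ⥤ AddCommGrpCat.{v}} {K P : C} (k : K ⟶ P) [Mono k]
    (α : preadditiveCoyoneda.obj (op P) ⟶ G) [Epi α]
    (φ : G ⟶ preadditiveCoyoneda.obj (op K)) (hφ : α ≫ φ = preadditiveCoyoneda.map k.op) :
    HasZeroDefect C (cokernel φ) :=
  ⟨K, P, k, cokernel.π φ, by rw [← hφ, Category.assoc, cokernel.condition, comp_zero],
    inferInstance,
    ShortComplex.exact_of_g_is_cokernel _ (isCokernelEpiComp (cokernelIsCokernel φ) α hφ.symm),
    isZero_kernel_of_mono k⟩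

variable {F : C ⥤ AddCommGrpCat.{v}} {X Y : C} {f : X ⟶ Y}
  {α : preadditiveCoyoneda.obj (op X) ⟶ F}

lemma exists_comp_eq_of_app_eq_zero {hw : preadditiveCoyoneda.map f.op ≫ α = 0}
    (hex : (ShortComplex.mk (preadditiveCoyoneda.map f.op) α hw).Exact) {A : C} (u : X ⟶ A)
    (hu : α.app A u = 0) : ∃ v : Y ⟶ A, f ≫ v = u :=
  (ShortComplex.ab_exact_iff _).1 (hex.map ((evaluation C AddCommGrpCat.{v}).obj A)) u hu

lemma app_app_eq_comp_of_comp_eq {K : C} {k : K ⟶ X} {φ : F ⟶ preadditiveCoyoneda.obj (op K)}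
    (hφ : α ≫ φ = preadditiveCoyoneda.map k.op) {A : C} (u : X ⟶ A) :
    φ.app A (α.app A u) = k ≫ u :=
  ConcreteCategory.congr_hom (NatTrans.congr_app hφ A) u

variable (φ : F ⟶ preadditiveCoyoneda.obj (op (kernel f)))

section

variable (hφ : α ≫ φ = preadditiveCoyoneda.map (kernel.ι f).op)

noncomputable def homCoimageToKernel :
    preadditiveCoyoneda.obj (op (Abelian.coimage f)) ⟶ kernel φ :=
  kernel.lift φ (preadditiveCoyoneda.map (Abelian.coimage.π f).op ≫ α) (by
    rw [Category.assoc, hφ]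
    exact preadditiveCoyoneda_map_op_comp_eq_zero (cokernel.condition _))

lemma homCoimageToKernel_comp_ι :
    homCoimageToKernel φ hφ ≫ kernel.ι φ =
      preadditiveCoyoneda.map (Abelian.coimage.π f).op ≫ α :=
  kernel.lift_ι _ _ _

lemma ι_app_homCoimageToKernel_app {A : C} (u : Abelian.coimage f ⟶ A) :
    (kernel.ι φ).app A ((homCoimageToKernel φ hφ).app A u) =
      α.app A (Abelian.coimage.π f ≫ u) :=
  ConcreteCategory.congr_hom (NatTrans.congr_app (homCoimageToKernel_comp_ι φ hφ) A) u

lemma epi_homCoimageToKernel [Epi α] : Epi (homCoimageToKernel φ hφ) := by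
  rw [NatTrans.epi_iff_epi_app]
  intro A
  rw [AddCommGrpCat.epi_iff_surjective]
  intro x
  obtain ⟨u, hu⟩ : ∃ u : X ⟶ A, α.app A u = (kernel.ι φ).app A x :=
    (AddCommGrpCat.epi_iff_surjective _).1 ((NatTrans.epi_iff_epi_app α).1 inferInstance A) _
  have hu0 : kernel.ι f ≫ u = 0 := by
    rw [← app_app_eq_comp_of_comp_eq hφ, hu]
    have hx := ConcreteCategory.congr_hom (NatTrans.congr_app (kernel.condition φ) A) x
    simp only [NatTrans.comp_app, Limits.zero_app, ConcreteCategory.comp_apply] at hx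
    exact hx
  refine ⟨cokernel.desc _ u hu0, ?_⟩
  apply (AddCommGrpCat.mono_iff_injective _).1
    ((NatTrans.mono_iff_mono_app (kernel.ι φ)).1 inferInstance A)
  rw [ι_app_homCoimageToKernel_app]
  exact (congrArg (α.app A) (cokernel.π_desc _ _ _)).trans hu

lemma map_factorThruCoimage_comp_homCoimageToKernel
    (hw : preadditiveCoyoneda.map f.op ≫ α = 0) :
    preadditiveCoyoneda.map (Abelian.factorThruCoimage f).op ≫ homCoimageToKernel φ hφ = 0 := by
  rw [← cancel_mono (kernel.ι φ), Category.assoc, homCoimageToKernel_comp_ι, zero_comp,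
    ← Category.assoc, ← Functor.map_comp, ← op_comp, Abelian.coimage.fac, hw]

lemma exact_homCoimageToKernel {hw : preadditiveCoyoneda.map f.op ≫ α = 0}
    (hex : (ShortComplex.mk (preadditiveCoyoneda.map f.op) α hw).Exact) :
    (ShortComplex.mk _ _ (map_factorThruCoimage_comp_homCoimageToKernel φ hφ hw)).Exact := by
  refine ShortComplex.exact_of_forall_exact_map_evaluation _ fun A => ?_
  rw [ShortComplex.ab_exact_iff]
  intro (u : Abelian.coimage f ⟶ A) hu
  have hαu : α.app A (Abelian.coimage.π f ≫ u) = 0 := by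
    rw [← ι_app_homCoimageToKernel_app φ hφ]
    exact (congrArg _ hu).trans (map_zero _)
  obtain ⟨v, hv⟩ := exists_comp_eq_of_app_eq_zero hex _ hαu
  refine ⟨v, show Abelian.factorThruCoimage f ≫ v = u from
    (cancel_epi (Abelian.coimage.π f)).1 ?_⟩
  rw [← Category.assoc, Abelian.coimage.fac, hv]

end

lemma hasZeroDefect_kernel {hw : preadditiveCoyoneda.map f.op ≫ α = 0}
    (hex : (ShortComplex.mk (preadditiveCoyoneda.map f.op) α hw).Exact) [Epi α]
    (hφ : α ≫ φ = preadditiveCoyoneda.map (kernel.ι f).op) :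
    HasZeroDefect C (kernel φ) :=
  ⟨_, Y, Abelian.factorThruCoimage f, homCoimageToKernel φ hφ, _, epi_homCoimageToKernel φ hφ,
    exact_homCoimageToKernel φ hφ hex, isZero_kernel_of_mono _⟩

end Presentation

/-- Every coherent functor `F` (with defect `w(F) = ker f` for a presentation
induced by `f : X ⟶ Y` via `α`) fits into a four-term exact sequence
`0 → F₀ → F → Hom(w(F),-) → F₁ → 0` where `w(F₀) = 0` and `w(F₁) = 0`, and the middle map `φ`
is the canonical one determined by `α ≫ φ = Hom(k,-)` for the kernel inclusion
`k : w(F) → X` (it is the unit of the adjunction `r⁰ ⊣ s`). -/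
theorem four_term_exact_sequence
    (F : C ⥤ AddCommGrpCat.{v}) (X Y : C) (f : X ⟶ Y)
    (α : preadditiveCoyoneda.obj (op X) ⟶ F)
    (hw : preadditiveCoyoneda.map f.op ≫ α = 0) (hα : Epi α)
    (hex : (ShortComplex.mk (preadditiveCoyoneda.map f.op) α hw).Exact) :
    ∃ (F₀ F₁ : C ⥤ AddCommGrpCat.{v}) (ι : F₀ ⟶ F)
      (φ : F ⟶ preadditiveCoyoneda.obj (op (kernel f)))
      (π : preadditiveCoyoneda.obj (op (kernel f)) ⟶ F₁)
      (h₁ : ι ≫ φ = 0) (h₂ : φ ≫ π = 0),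
      Mono ι ∧ Epi π ∧
      (ShortComplex.mk ι φ h₁).Exact ∧
      (ShortComplex.mk φ π h₂).Exact ∧
      HasZeroDefect C F₀ ∧ HasZeroDefect C F₁ ∧
      α ≫ φ = preadditiveCoyoneda.map (kernel.ι f).op := by
  let φ := hex.desc (preadditiveCoyoneda.map (kernel.ι f).op)
    (preadditiveCoyoneda_map_op_comp_eq_zero (kernel.condition f))
  have hφ : α ≫ φ = preadditiveCoyoneda.map (kernel.ι f).op := hex.g_desc _ _
  exact ⟨kernel φ, cokernel φ, kernel.ι φ, φ, cokernel.π φ, kernel.condition φ,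
    cokernel.condition φ, inferInstance, inferInstance,
    ShortComplex.exact_of_f_is_kernel _ (kernelIsKernel φ),
    ShortComplex.exact_of_g_is_cokernel _ (cokernelIsCokernel φ),
    hasZeroDefect_kernel φ hex hφ, hasZeroDefect_cokernel (kernel.ι f) α φ hφ, hφ⟩
end

section
/- If an abelian category C has enough projectives, then every coherent functor F : C → Ab admits an injective resolution of length at most 2 in fp(C, Ab): there is an exact sequence 0 → F → I⁰ → I¹ → I² → 0 with each Iʲ injective in fp(C, Ab). In particular fp(C, Ab) has enough injectives and every coherent functor has injective dimension at most 2. -/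
open CategoryTheory CategoryTheory.Limits Opposite

universe v u

variable (C : Type u) [Category.{v} C] [Abelian C]

/-!
A coherent functor is the cokernel `H_g` (`cokerFunctor g`) of `Hom(Y, -) ⟶ Hom(X, -)` for
some `g : X ⟶ Y`.
When `g : P ⟶ Q` is a map between projectives, `H_g` is half exact, because `Hom(P, -)` and
`Hom(Q, -)` are exact; testing a monomorphism `F₁ ⟶ F₂` of coherent functors on the generator
of `F₁` and using half-exactness then extends maps `F₁ ⟶ H_g` to `F₂`, so `H_g` is injective in
`fp(C, Ab)`.

To embed `H_g` for an arbitrary `g : X ⟶ Y`, cover `Y` by a projective `P` and the pullback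
`X ×_Y P` by a projective `Q`, giving `u : Q ⟶ X` and `g₀ : Q ⟶ P`. Since the pullback square
is also a pushout, `u` induces a monomorphism `H_g ⟶ H_{g₀}` whose cokernel is `H_{(g₀, u)}`
for `(g₀, u) : Q ⟶ P ⊞ X`. Repeating this once with `(g₀, u)` in place of `g` embeds the
cokernel into `H_{g₁}`, and the new cokernel is `H_{(g₁, u₁)}` with `(g₁, u₁) : Q₁ ⟶ P₁ ⊞ Q`, a
map between projectives, hence already injective.
-/

open ZeroObject

namespace CoherentFunctor

variable {C}

lemma exact_of_forall_app {J : Type*} [Category J] (S : ShortComplex (J ⥤ AddCommGrpCat.{v}))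
    (hS : ∀ (A : J) (x : S.X₂.obj A), S.g.app A x = 0 → ∃ y, S.f.app A y = x) : S.Exact := by
  rw [S.exact_iff_isZero_homology]
  refine Functor.isZero _ fun A => ?_
  have hA : (S.map ((evaluation J _).obj A)).Exact := (ShortComplex.ab_exact_iff _).mpr (hS A)
  exact IsZero.of_iso ((ShortComplex.exact_iff_isZero_homology _).mp hA)
    (S.mapHomologyIso ((evaluation J _).obj A)).symm

lemma exact_of_epi_of_mono {D : Type*} [Category D] [Abelian D] {S : ShortComplex D}
    (hS : S.Exact) {X₁ X₃ : D} (p : X₁ ⟶ S.X₁) (m : S.X₃ ⟶ X₃) [Epi p] [Mono m]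
    {f : X₁ ⟶ S.X₂} {g : S.X₂ ⟶ X₃} (hf : p ≫ S.f = f) (hg : S.g ≫ m = g) :
    (ShortComplex.mk f g (by simp [← hf, ← hg])).Exact := by
  subst hf hg
  let S' := ShortComplex.mk (p ≫ S.f) S.g (by simp)
  have hS' := (ShortComplex.exact_iff_of_epi_of_isIso_of_mono
    (⟨p, 𝟙 _, 𝟙 _, by simp [S'], by simp [S']⟩ : S' ⟶ S)).mpr hS
  exact (ShortComplex.exact_iff_of_epi_of_isIso_of_mono
    (⟨𝟙 _, 𝟙 _, m, by simp [S'], by simp [S']⟩ : S' ⟶ .mk (p ≫ S.f) (S.g ≫ m) (by simp))).mp hS'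

def precompRange {X Y : C} (g : X ⟶ Y) (A : C) : AddSubgroup (X ⟶ A) :=
  (Preadditive.leftComp A g).range

def cokerFunctor {X Y : C} (g : X ⟶ Y) : C ⥤ AddCommGrpCat.{v} where
  obj A := AddCommGrpCat.of ((X ⟶ A) ⧸ precompRange g A)
  map {A B} k := AddCommGrpCat.ofHom <| QuotientAddGroup.map _ _ (Preadditive.rightComp X k) <| by
    rintro _ ⟨σ, rfl⟩
    exact ⟨σ ≫ k, by simp [Preadditive.leftComp, Preadditive.rightComp]⟩
  map_id A := by
    ext
    simp [Preadditive.rightComp]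
  map_comp k l := by
    ext
    simp [Preadditive.rightComp]

namespace cokerFunctor

variable {X Y : C} (g : X ⟶ Y)

def mk (A : C) : (X ⟶ A) →+ (cokerFunctor g).obj A := QuotientAddGroup.mk' (precompRange g A)

lemma mk_surjective (A : C) : Function.Surjective (mk g A) :=
  QuotientAddGroup.mk'_surjective _

@[simp] lemma map_mk {A B : C} (k : A ⟶ B) (θ : X ⟶ A) :
    (cokerFunctor g).map k (mk g A θ) = mk g B (θ ≫ k) := rfl

lemma mk_eq_zero_iff {A : C} (θ : X ⟶ A) : mk g A θ = 0 ↔ ∃ σ : Y ⟶ A, g ≫ σ = θ :=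
  QuotientAddGroup.eq_zero_iff θ

@[simp] lemma mk_comp_eq_zero {A : C} (σ : Y ⟶ A) : mk g A (g ≫ σ) = 0 :=
  (mk_eq_zero_iff g _).mpr ⟨σ, rfl⟩

lemma mk_eq_mk_of_sub_eq {A : C} {θ θ' : X ⟶ A} (σ : Y ⟶ A) (h : θ - θ' = g ≫ σ) :
    mk g A θ = mk g A θ' := by
  rw [← sub_eq_zero, ← map_sub, h, mk_comp_eq_zero]

lemma mk_eq_map_mk_id {A : C} (θ : X ⟶ A) : mk g A θ = (cokerFunctor g).map θ (mk g X (𝟙 X)) := by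
  simp

instance : (cokerFunctor g).Additive where
  map_add {A B k l} := by
    ext x
    obtain ⟨θ, rfl⟩ := mk_surjective g A x
    simp [← map_add]

lemma hom_ext {G : C ⥤ AddCommGrpCat.{v}} {η η' : cokerFunctor g ⟶ G}
    (h : η.app X (mk g X (𝟙 X)) = η'.app X (mk g X (𝟙 X))) : η = η' := by
  ext A x
  obtain ⟨θ, rfl⟩ := mk_surjective g A x
  rw [mk_eq_map_mk_id, NatTrans.naturality_apply, NatTrans.naturality_apply, h]

def π : preadditiveCoyoneda.obj (op X) ⟶ cokerFunctor g where
  app A := AddCommGrpCat.ofHom (mk g A)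
  naturality _ _ _ := rfl

instance : Epi (π g) := by
  have (A : C) : Epi ((π g).app A) :=
    (AddCommGrpCat.epi_iff_surjective _).mpr (mk_surjective g A)
  exact NatTrans.epi_of_epi_app _

lemma exact_π : (ShortComplex.mk (preadditiveCoyoneda.map g.op) (π g)
    (by ext _ σ; exact mk_comp_eq_zero g σ)).Exact :=
  exact_of_forall_app _ fun _ θ hθ => (mk_eq_zero_iff g θ).mp hθ

end cokerFunctor

lemma isCoherent_cokerFunctor {X Y : C} (g : X ⟶ Y) : IsCoherent C (cokerFunctor g) :=
  ⟨X, Y, g, cokerFunctor.π g, _, inferInstance, cokerFunctor.exact_π g⟩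

abbrev cokerObj {X Y : C} (g : X ⟶ Y) : Fp C := ⟨cokerFunctor g, isCoherent_cokerFunctor g⟩

lemma exists_iso_cokerObj (F : Fp C) : ∃ (X Y : C) (g : X ⟶ Y), Nonempty (cokerObj g ≅ F) := by
  obtain ⟨X, Y, g, α, _, _, hα⟩ := F.property
  exact ⟨X, Y, g, ⟨ObjectProperty.isoMk _ <| IsColimit.coconePointUniqueUpToIso
    (cokerFunctor.exact_π g).gIsCokernel hα.gIsCokernel⟩⟩

def cokerFunctorMap {X Y X' Y' : C} {g : X ⟶ Y} {g' : X' ⟶ Y'} (u : X' ⟶ X) (e : Y' ⟶ Y)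
    (h : u ≫ g = g' ≫ e) : cokerFunctor g ⟶ cokerFunctor g' where
  app A := AddCommGrpCat.ofHom <| QuotientAddGroup.map _ _ (Preadditive.leftComp A u) <| by
    rintro _ ⟨σ, rfl⟩
    exact ⟨e ≫ σ, by simp [Preadditive.leftComp, reassoc_of% h]⟩
  naturality A B k := by
    ext x
    obtain ⟨θ, rfl⟩ := cokerFunctor.mk_surjective g A x
    show cokerFunctor.mk g' B (u ≫ θ ≫ k) = cokerFunctor.mk g' B ((u ≫ θ) ≫ k)
    rw [Category.assoc]

@[simp] lemma cokerFunctorMap_app_mk {X Y X' Y' A : C} {g : X ⟶ Y} {g' : X' ⟶ Y'} (u : X' ⟶ X)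
    (e : Y' ⟶ Y) (h : u ≫ g = g' ≫ e) (θ : X ⟶ A) :
    (cokerFunctorMap u e h).app A (cokerFunctor.mk g A θ) = cokerFunctor.mk g' A (u ≫ θ) := rfl

lemma cokerFunctor.exists_hom_app_mk_id {P Q X Y : C} {f : P ⟶ Q} (g : X ⟶ Y)
    (x : (cokerFunctor f).obj X) (hx : (cokerFunctor f).map g x = 0) :
    ∃ ψ : cokerFunctor g ⟶ cokerFunctor f, ψ.app X (cokerFunctor.mk g X (𝟙 X)) = x := by
  obtain ⟨τ, rfl⟩ := cokerFunctor.mk_surjective f X x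
  obtain ⟨σ, hσ⟩ := (cokerFunctor.mk_eq_zero_iff f (τ ≫ g)).mp hx
  exact ⟨cokerFunctorMap τ σ hσ.symm, congrArg (cokerFunctor.mk f X) (Category.comp_id τ)⟩

/-- Elements of `(cokerFunctor g).obj A` are detected by maps out of the representable functor
`cokerObj (0 : A ⟶ 0) = Hom(A, -)`, which is coherent. -/
lemma injective_app_of_mono {X Y : C} {g : X ⟶ Y} {F : Fp C} (ι : cokerObj g ⟶ F) [Mono ι]
    (A : C) : Function.Injective (ι.hom.app A) := by
  rw [injective_iff_map_eq_zero]
  intro x hx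
  obtain ⟨θ, rfl⟩ := cokerFunctor.mk_surjective g A x
  let j : cokerObj (0 : A ⟶ 0) ⟶ cokerObj g :=
    ObjectProperty.homMk (cokerFunctorMap θ 0 (by simp))
  have hj : j = ObjectProperty.homMk 0 := by
    refine (cancel_mono ι).mp (ObjectProperty.hom_ext _ (cokerFunctor.hom_ext _ ?_))
    simpa [j] using hx
  simpa [j] using congr(($hj).hom.app A (cokerFunctor.mk _ A (𝟙 A)))

lemma exact_map_cokerFunctor {P Q : C} [Projective P] [Projective Q] (f : P ⟶ Q)
    {S : ShortComplex C} (hS : S.Exact) [Epi S.g] : (S.map (cokerFunctor f)).Exact := by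
  rw [ShortComplex.ab_exact_iff]
  intro y hy
  obtain ⟨ρ, rfl⟩ := cokerFunctor.mk_surjective f _ y
  obtain ⟨σ, hσ⟩ := (cokerFunctor.mk_eq_zero_iff f (ρ ≫ S.g)).mp hy
  let σ' := Projective.factorThru σ S.g
  have h0 : (ρ - f ≫ σ') ≫ S.g = 0 := by simp [σ', hσ]
  refine ⟨cokerFunctor.mk f _ (hS.liftFromProjective _ h0), ?_⟩
  change cokerFunctor.mk f _ (hS.liftFromProjective _ h0 ≫ S.f) = _
  rw [hS.liftFromProjective_comp]
  exact (cokerFunctor.mk_eq_mk_of_sub_eq f σ' (sub_sub_cancel _ _)).symm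

lemma exists_comp_eq_of_mono {P Q : C} [Projective P] [Projective Q] (f : P ⟶ Q)
    {X₁ Y₁ X₂ Y₂ : C} {g₁ : X₁ ⟶ Y₁} {g₂ : X₂ ⟶ Y₂} (ι : cokerObj g₁ ⟶ cokerObj g₂) [Mono ι]
    (φ : cokerObj g₁ ⟶ cokerObj f) : ∃ ψ, ι ≫ ψ = φ := by
  let H := cokerFunctor f
  let y₀ := cokerFunctor.mk g₁ X₁ (𝟙 X₁)
  obtain ⟨θ₀, hθ₀⟩ := cokerFunctor.mk_surjective g₂ X₁ (ι.hom.app X₁ y₀)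
  let t : X₂ ⟶ X₁ ⊞ Y₂ := biprod.lift θ₀ g₂
  have hθ₀t : θ₀ ≫ biprod.inl ≫ cokernel.π t = g₂ ≫ (-(biprod.inr ≫ cokernel.π t)) := by
    rw [Preadditive.comp_neg, eq_neg_iff_add_eq_zero, ← Category.assoc, ← Category.assoc,
      ← Preadditive.add_comp, ← biprod.lift_eq, cokernel.condition]
  have hy₀ : (cokerFunctor g₁).map (biprod.inl ≫ cokernel.π t) y₀ = 0 := by
    apply injective_app_of_mono ι
    rw [map_zero, NatTrans.naturality_apply, ← hθ₀, cokerFunctor.map_mk, hθ₀t,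
      cokerFunctor.mk_comp_eq_zero]
  have hS : (ShortComplex.mk t (cokernel.π t) (cokernel.condition t)).Exact :=
    ShortComplex.exact_of_g_is_cokernel _ (cokernelIsCokernel t)
  -- `φ y₀`, pushed into `H (X₁ ⊞ Y₂)`, dies in `H (cokernel t)` because `y₀` already does;
  -- half-exactness lifts it to `x : H X₂`, whose two components are read off below.
  obtain ⟨x, hx⟩ : ∃ x : H.obj X₂, H.map t x = H.map biprod.inl (φ.hom.app X₁ y₀) :=
    (ShortComplex.ab_exact_iff _).mp (exact_map_cokerFunctor f hS)
    (H.map biprod.inl (φ.hom.app X₁ y₀)) (by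
      change H.map (cokernel.π t) _ = 0
      rw [← CategoryTheory.comp_apply, ← Functor.map_comp, ← NatTrans.naturality_apply, hy₀,
        map_zero])
  have hx₁ : H.map θ₀ x = φ.hom.app X₁ y₀ := by
    rw [← biprod.lift_fst θ₀ g₂, Functor.map_comp, CategoryTheory.comp_apply, hx,
      ← CategoryTheory.comp_apply, ← Functor.map_comp, biprod.inl_fst]
    simp
  have hx₂ : H.map g₂ x = 0 := by
    rw [← biprod.lift_snd θ₀ g₂, Functor.map_comp, CategoryTheory.comp_apply, hx,
      ← CategoryTheory.comp_apply, ← Functor.map_comp, biprod.inl_snd]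
    simp
  obtain ⟨ψ, hψ⟩ := cokerFunctor.exists_hom_app_mk_id g₂ x hx₂
  refine ⟨ObjectProperty.homMk ψ, ObjectProperty.hom_ext _ (cokerFunctor.hom_ext _ ?_)⟩
  change ψ.app X₁ (ι.hom.app X₁ y₀) = _
  rw [← hθ₀, cokerFunctor.mk_eq_map_mk_id, NatTrans.naturality_apply, hψ, hx₁]

lemma injective_cokerObj {P Q : C} [Projective P] [Projective Q] (f : P ⟶ Q) :
    Injective (cokerObj f) where
  factors {F₁ F₂} φ ι _ := by
    obtain ⟨_, _, g₁, ⟨e₁⟩⟩ := exists_iso_cokerObj F₁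
    obtain ⟨_, _, g₂, ⟨e₂⟩⟩ := exists_iso_cokerObj F₂
    obtain ⟨ψ, hψ⟩ := exists_comp_eq_of_mono f (e₁.hom ≫ ι ≫ e₂.inv) (e₁.hom ≫ φ)
    exact ⟨e₂.inv ≫ ψ, by simpa using hψ⟩

lemma exists_comp_eq_of_pullback_of_epi {X Y P A : C} (g : X ⟶ Y) (e : P ⟶ Y) [Epi e]
    (φ : X ⟶ A) (ψ : P ⟶ A) (h : pullback.fst g e ≫ φ = pullback.snd g e ≫ ψ) :
    ∃ χ : Y ⟶ A, g ≫ χ = φ := by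
  -- `X ×_Y P ⟶ X ⊞ P ⟶ Y ⟶ 0` is exact since `e` is epi, so `Y` is a cokernel.
  open Abelian.PullbackToBiproductIsKernel in
  have hS := ShortComplex.exact_of_f_is_kernel
    (.mk _ _ (pullbackToBiproductFork g e).condition) (isLimitPullbackToBiproduct g e)
  have : Epi (-e) := by simpa using epi_comp e (-𝟙 Y)
  have : Epi (biprod.desc g (-e)) := epi_of_epi_fac (biprod.inr_desc g (-e))
  obtain ⟨χ, hχ⟩ := CokernelCofork.IsColimit.desc' hS.gIsCokernel (biprod.desc φ (-ψ))
    (by simp [h])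
  exact ⟨χ, by simpa using biprod.inl ≫= hχ⟩

lemma exists_projective_square [EnoughProjectives C] {X Y : C} (g : X ⟶ Y) :
    ∃ (P Q : C) (_ : Projective P) (_ : Projective Q) (e : P ⟶ Y) (u : Q ⟶ X) (g₀ : Q ⟶ P),
      u ≫ g = g₀ ≫ e ∧
      ∀ ⦃A : C⦄ (φ : X ⟶ A) (ψ : P ⟶ A), u ≫ φ = g₀ ≫ ψ → ∃ χ : Y ⟶ A, g ≫ χ = φ := by
  let e := Projective.π Y
  let s := Projective.π (pullback g e)
  refine ⟨_, _, inferInstance, inferInstance, e, s ≫ pullback.fst g e, s ≫ pullback.snd g e,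
    by simp [pullback.condition], fun A φ ψ h => ?_⟩
  exact exists_comp_eq_of_pullback_of_epi g e φ ψ
    ((cancel_epi s).mp (by simpa only [Category.assoc] using h))

section Embedding

variable {X Y P Q : C} {g : X ⟶ Y} {g₀ : Q ⟶ P} {u : Q ⟶ X} {e : P ⟶ Y} (h : u ≫ g = g₀ ≫ e)

lemma mono_cokerFunctorMap
    (hfac : ∀ ⦃A : C⦄ (φ : X ⟶ A) (ψ : P ⟶ A), u ≫ φ = g₀ ≫ ψ → ∃ χ : Y ⟶ A, g ≫ χ = φ) :
    Mono (cokerFunctorMap u e h) := by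
  have (A : C) : Mono ((cokerFunctorMap u e h).app A) := by
    rw [AddCommGrpCat.mono_iff_injective, injective_iff_map_eq_zero]
    intro x hx
    obtain ⟨θ, rfl⟩ := cokerFunctor.mk_surjective g A x
    obtain ⟨ψ, hψ⟩ := (cokerFunctor.mk_eq_zero_iff g₀ (u ≫ θ)).mp hx
    obtain ⟨χ, rfl⟩ := hfac θ ψ hψ.symm
    exact cokerFunctor.mk_comp_eq_zero g χ
  exact NatTrans.mono_of_mono_app _

instance {X Y Y' : C} {g : X ⟶ Y} {g' : X ⟶ Y'} (e : Y' ⟶ Y) (h : 𝟙 X ≫ g = g' ≫ e) :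
    Epi (cokerFunctorMap (𝟙 X) e h) := by
  have (A : C) : Epi ((cokerFunctorMap (𝟙 X) e h).app A) := by
    rw [AddCommGrpCat.epi_iff_surjective]
    intro x
    obtain ⟨θ, rfl⟩ := cokerFunctor.mk_surjective g' A x
    exact ⟨cokerFunctor.mk g A θ, congrArg (cokerFunctor.mk g' A) (Category.id_comp θ)⟩
  exact NatTrans.epi_of_epi_app _

variable (g₀ u) in
noncomputable abbrev cokerFunctorMapLift :
    cokerFunctor g₀ ⟶ cokerFunctor (biprod.lift g₀ u) :=
  cokerFunctorMap (𝟙 Q) biprod.fst (by simp)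

lemma cokerFunctorMap_comp_cokerFunctorMapLift :
    cokerFunctorMap u e h ≫ cokerFunctorMapLift g₀ u = 0 :=
  cokerFunctor.hom_ext _ ((cokerFunctor.mk_eq_zero_iff _ _).mpr
    ⟨biprod.desc 0 (𝟙 X), by simp [Preadditive.leftComp]⟩)

lemma exact_cokerFunctorMap_cokerFunctorMapLift :
    (ShortComplex.mk _ _ (cokerFunctorMap_comp_cokerFunctorMapLift h)).Exact := by
  refine exact_of_forall_app _ fun A x hx => ?_
  obtain ⟨θ, rfl⟩ := cokerFunctor.mk_surjective g₀ A x
  obtain ⟨w, hw⟩ := (cokerFunctor.mk_eq_zero_iff _ (𝟙 Q ≫ θ)).mp hx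
  refine ⟨cokerFunctor.mk g A (biprod.inr ≫ w),
    (cokerFunctor.mk_eq_mk_of_sub_eq g₀ (biprod.inl ≫ w) ?_).symm⟩
  rw [← Category.id_comp θ, ← hw, biprod.lift_eq]
  simp [Preadditive.leftComp]

end Embedding

end CoherentFunctor

open CoherentFunctor in
/-- If `C` has enough projectives, then every coherent functor `F` admits an
injective resolution `0 → F → I⁰ → I¹ → I² → 0` of length at most 2 in `fp(C, Ab)`, with each
`Iʲ` an injective object of `fp(C, Ab)` (exactness computed in `(C, Ab)`, into which the
inclusion of `fp(C, Ab)` is exact). In particular `fp(C, Ab)` has enough injectives and every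
coherent functor has injective dimension at most 2. -/
theorem coherent_has_injective_resolution_of_enoughProjectives
    [EnoughProjectives C] (F : Fp C) :
    ∃ (I₀ I₁ I₂ : Fp C) (a : F ⟶ I₀) (b : I₀ ⟶ I₁) (c : I₁ ⟶ I₂)
      (h₁ : (a.hom : F.obj ⟶ I₀.obj) ≫ (b.hom : I₀.obj ⟶ I₁.obj) = 0)
      (h₂ : (b.hom : I₀.obj ⟶ I₁.obj) ≫ (c.hom : I₁.obj ⟶ I₂.obj) = 0),
      Injective I₀ ∧ Injective I₁ ∧ Injective I₂ ∧
      Mono (a.hom : F.obj ⟶ I₀.obj) ∧ Epi (c.hom : I₁.obj ⟶ I₂.obj) ∧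
      (ShortComplex.mk (a.hom : F.obj ⟶ I₀.obj) (b.hom : I₀.obj ⟶ I₁.obj) h₁).Exact ∧
      (ShortComplex.mk (b.hom : I₀.obj ⟶ I₁.obj) (c.hom : I₁.obj ⟶ I₂.obj) h₂).Exact := by
  obtain ⟨X, Y, f, ⟨eF⟩⟩ := exists_iso_cokerObj F
  obtain ⟨P₀, Q₀, _, _, e₀, u₀, g₀, sq₀, fac₀⟩ := exists_projective_square f
  obtain ⟨P₁, Q₁, _, _, e₁, u₁, g₁, sq₁, fac₁⟩ := exists_projective_square (biprod.lift g₀ u₀)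
  have := mono_cokerFunctorMap sq₀ fac₀
  have := mono_cokerFunctorMap sq₁ fac₁
  have : IsIso eF.inv.hom := (ObjectProperty.isIso_hom_iff eF.inv).mpr inferInstance
  refine ⟨cokerObj g₀, cokerObj g₁, cokerObj (biprod.lift g₁ u₁),
    eF.inv ≫ ObjectProperty.homMk (cokerFunctorMap u₀ e₀ sq₀),
    ObjectProperty.homMk (cokerFunctorMapLift g₀ u₀ ≫ cokerFunctorMap u₁ e₁ sq₁),
    ObjectProperty.homMk (cokerFunctorMapLift g₁ u₁), ?_, ?_,
    injective_cokerObj g₀, injective_cokerObj g₁, injective_cokerObj _, ?_, ?_, ?_, ?_⟩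
  · simp [reassoc_of% cokerFunctorMap_comp_cokerFunctorMapLift sq₀]
  · simp [cokerFunctorMap_comp_cokerFunctorMapLift sq₁]
  · exact mono_comp eF.inv.hom (cokerFunctorMap u₀ e₀ sq₀)
  · exact inferInstanceAs (Epi (cokerFunctorMapLift g₁ u₁))
  · exact exact_of_epi_of_mono (exact_cokerFunctorMap_cokerFunctorMapLift sq₀) eF.inv.hom
      (cokerFunctorMap u₁ e₁ sq₁) rfl rfl
  · exact exact_of_epi_of_mono (exact_cokerFunctorMap_cokerFunctorMapLift sq₁)
      (cokerFunctorMapLift g₀ u₀) (𝟙 _) rfl (Category.comp_id _)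
end
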